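/- arXiv:2404.00581 — 2 statements merged into one kernel-verified Lean document; each statement's English description precedes it below -/
import Mathlib

section
/- Let 𝕌 be a composite theory of 𝕋 after 𝕊, with free algebra monads U, S, T, and let φ : U ⇒ TS and ψ : TS ⇒ U be the natural isomorphisms induced by separation. Define η^{TS} := η^T η^S and μ^{TS} := φ ∘ μ^U ∘ (ψU ∘ TSψ). Then (TS, η^{TS}, μ^{TS}) is a monad, i.e. it satisfies both unit laws μ^{TS} ∘ TSη^{TS} = id = μ^{TS} ∘ η^{TS}TS and the associativity law μ^{TS} ∘ μ^{TS}TS = μ^{TS} ∘ TSμ^{TS}. -/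
/-! ## Algebraic signatures, terms and equational logic -/

/-- An algebraic signature: a set of operation symbols with arities. -/
structure Sgn where
  ops : Type
  ar : ops → ℕ

/-- Terms over a signature `σ` with variables in `X`. -/
inductive Trm (σ : Sgn) (X : Type) : Type
  | var : X → Trm σ X
  | op : (f : σ.ops) → (Fin (σ.ar f) → Trm σ X) → Trm σ X

/-- Simultaneous substitution. -/
def Trm.bind {σ : Sgn} {X Y : Type} : Trm σ X → (X → Trm σ Y) → Trm σ Y
  | .var x, g => g x
  | .op f k, g => .op f fun i => (k i).bind g

/-- Renaming of variables. -/
def Trm.rename {σ : Sgn} {X Y : Type} (f : X → Y) (t : Trm σ X) : Trm σ Y :=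
  t.bind fun x => .var (f x)

/-- Equations over `σ`: pairs of terms over the fixed countable set `ℕ` of variables. -/
abbrev Eqn (σ : Sgn) := Trm σ ℕ × Trm σ ℕ

/-- Derivability in equational logic from the set of axioms `E`
(axioms, reflexivity, symmetry, transitivity, congruence, substitution). -/
inductive Deriv {σ : Sgn} (E : Set (Eqn σ)) : {X : Type} → Trm σ X → Trm σ X → Prop
  | ax {X : Type} {e : Eqn σ} (he : e ∈ E) (g : ℕ → Trm σ X) :
      Deriv E (e.1.bind g) (e.2.bind g)
  | refl {X : Type} (t : Trm σ X) : Deriv E t t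
  | symm {X : Type} {s t : Trm σ X} : Deriv E s t → Deriv E t s
  | trans {X : Type} {s t u : Trm σ X} : Deriv E s t → Deriv E t u → Deriv E s u
  | congr {X : Type} (f : σ.ops) {k k' : Fin (σ.ar f) → Trm σ X} :
      (∀ i, Deriv E (k i) (k' i)) → Deriv E (.op f k) (.op f k')
  | subst {X Y : Type} {s t : Trm σ X} (g : X → Trm σ Y) :
      Deriv E s t → Deriv E (s.bind g) (t.bind g)

/-- An algebraic theory: a signature together with a set of equations. -/
structure Thy where
  sig : Sgn
  eqns : Set (Eqn sig)

/-! ## The free algebra monad -/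

/-- Carrier of the free algebra monad: terms modulo derivable equality. -/
def FreeM (σ : Sgn) (E : Set (Eqn σ)) (X : Type) : Type :=
  Quot (fun s t : Trm σ X => Deriv E s t)

/-- Equivalence class of a term. -/
def FreeM.mk {σ : Sgn} {E : Set (Eqn σ)} {X : Type} (t : Trm σ X) : FreeM σ E X :=
  Quot.mk _ t

/-- Functorial action of the free algebra monad. -/
noncomputable def FreeM.map {σ : Sgn} {E : Set (Eqn σ)} {X Y : Type}
    (f : X → Y) (q : FreeM σ E X) : FreeM σ E Y :=
  FreeM.mk ((Quot.out q).rename f)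

/-- Unit of the free algebra monad. -/
def FreeM.unit {σ : Sgn} {E : Set (Eqn σ)} {X : Type} (x : X) : FreeM σ E X :=
  FreeM.mk (.var x)

/-- Multiplication of the free algebra monad (flattening). -/
noncomputable def FreeM.mul {σ : Sgn} {E : Set (Eqn σ)} {X : Type}
    (q : FreeM σ E (FreeM σ E X)) : FreeM σ E X :=
  FreeM.mk ((Quot.out q).bind fun c => Quot.out c)

/-! ## Disjoint union of signatures and separated terms -/

/-- Disjoint union of two signatures. -/
def Sgn.sum (σ τ : Sgn) : Sgn := ⟨σ.ops ⊕ τ.ops, Sum.elim σ.ar τ.ar⟩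

/-- Embedding of `σ`-terms into terms over the sum signature. -/
def Trm.inl {σ τ : Sgn} {X : Type} : Trm σ X → Trm (σ.sum τ) X
  | .var x => .var x
  | .op f k => .op (Sum.inl f) fun i => (k i).inl

/-- Embedding of `τ`-terms into terms over the sum signature. -/
def Trm.inr {σ τ : Sgn} {X : Type} : Trm τ X → Trm (σ.sum τ) X
  | .var x => .var x
  | .op f k => .op (Sum.inr f) fun i => (k i).inr

/-- Flattening of a separated term `t[s_x/x]` (`τ`-term over `σ`-terms)
into a term over the sum signature. -/
def sepTS {σ τ : Sgn} {X : Type} (t : Trm τ (Trm σ X)) : Trm (σ.sum τ) X :=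
  (Trm.inr t).bind fun s => Trm.inl s

/-- Flattening of a mixed term `s[t_x/x]` (`σ`-term over `τ`-terms)
into a term over the sum signature. -/
def sepST {σ τ : Sgn} {X : Type} (s : Trm σ (Trm τ X)) : Trm (σ.sum τ) X :=
  (Trm.inl s).bind fun t => Trm.inr t

/-- The element `[t[[s_x]_𝕊/x]]_𝕋` of `TSX` determined by a separated term. -/
def clTS (SS TT : Thy) {X : Type} (t : Trm TT.sig (Trm SS.sig X)) :
    FreeM TT.sig TT.eqns (FreeM SS.sig SS.eqns X) :=
  FreeM.mk (t.rename FreeM.mk)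

/-- The element `[s[[t_x]_𝕋/x]]_𝕊` of `STX` determined by a mixed term. -/
def clST (SS TT : Thy) {X : Type} (s : Trm SS.sig (Trm TT.sig X)) :
    FreeM SS.sig SS.eqns (FreeM TT.sig TT.eqns X) :=
  FreeM.mk (s.rename FreeM.mk)

/-! ## Composite theories -/

/-- A composite theory of `TT` after `SS`: a theory on the disjoint union
of the signatures, containing both sets of equations, in which every term
has a separation, and separations are essentially unique. -/
structure Composite (SS TT : Thy) where
  eqns : Set (Eqn (SS.sig.sum TT.sig))
  containsS : ∀ e ∈ SS.eqns, ((Trm.inl e.1 : Trm (SS.sig.sum TT.sig) ℕ), Trm.inl e.2) ∈ eqns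
  containsT : ∀ e ∈ TT.eqns, ((Trm.inr e.1 : Trm (SS.sig.sum TT.sig) ℕ), Trm.inr e.2) ∈ eqns
  sepExists : ∀ u : Trm (SS.sig.sum TT.sig) ℕ,
      ∃ t : Trm TT.sig (Trm SS.sig ℕ), Deriv eqns u (sepTS t)
  sepUnique : ∀ t t' : Trm TT.sig (Trm SS.sig ℕ),
      Deriv eqns (sepTS t) (sepTS t') → clTS SS TT t = clTS SS TT t'

/-! ## Distributive laws between free algebra monads -/

/-- A distributive law `λ : ST ⇒ TS` between the free algebra monads of `SS` and `TT`. -/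
structure DistLaw (SS TT : Thy) where
  app : ∀ X : Type, FreeM SS.sig SS.eqns (FreeM TT.sig TT.eqns X) →
      FreeM TT.sig TT.eqns (FreeM SS.sig SS.eqns X)
  natural : ∀ (X Y : Type) (f : X → Y)
      (q : FreeM SS.sig SS.eqns (FreeM TT.sig TT.eqns X)),
      app Y (FreeM.map (FreeM.map f) q) = FreeM.map (FreeM.map f) (app X q)
  unitS : ∀ (X : Type) (q : FreeM TT.sig TT.eqns X),
      app X (FreeM.unit q) = FreeM.map FreeM.unit q
  unitT : ∀ (X : Type) (q : FreeM SS.sig SS.eqns X),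
      app X (FreeM.map FreeM.unit q) = FreeM.unit q
  mulS : ∀ (X : Type)
      (q : FreeM SS.sig SS.eqns (FreeM SS.sig SS.eqns (FreeM TT.sig TT.eqns X))),
      app X (FreeM.mul q) =
        FreeM.map FreeM.mul (app (FreeM SS.sig SS.eqns X) (FreeM.map (app X) q))
  mulT : ∀ (X : Type)
      (q : FreeM SS.sig SS.eqns (FreeM TT.sig TT.eqns (FreeM TT.sig TT.eqns X))),
      app X (FreeM.map FreeM.mul q) =
        FreeM.mul (FreeM.map (app X) (app (FreeM TT.sig TT.eqns X) q))

/-! ## Statement 2: the monad structure on `TS` induced by a composite theory -/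

/-- The composite functor `TS`. -/
abbrev TSobj (SS TT : Thy) (X : Type) : Type :=
  FreeM TT.sig TT.eqns (FreeM SS.sig SS.eqns X)

/-- The unit `η^{TS} := η^T η^S`. -/
def etaTS (SS TT : Thy) (X : Type) (x : X) : TSobj SS TT X :=
  FreeM.unit (FreeM.unit x)

/-- The multiplication `μ^{TS} := φ ∘ μ^U ∘ (ψU ∘ TSψ)`. -/
noncomputable def muTS (SS TT : Thy) (U : Composite SS TT)
    (φ : ∀ X : Type, FreeM (SS.sig.sum TT.sig) U.eqns X → TSobj SS TT X)
    (ψ : ∀ X : Type, TSobj SS TT X → FreeM (SS.sig.sum TT.sig) U.eqns X)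
    (X : Type) (q : TSobj SS TT (TSobj SS TT X)) : TSobj SS TT X :=
  φ X (FreeM.mul (ψ (FreeM (SS.sig.sum TT.sig) U.eqns X)
    (FreeM.map (FreeM.map (ψ X)) q)))

/-! The three laws are those of the free monad `U`, transported along the natural isomorphism
`ψ : TS ≅ U`: since `ψ` is injective it suffices to check them after applying `ψ`, and
`ψ ∘ μ^{TS} = μ^U ∘ Uψ ∘ ψTS`, `ψ ∘ η^{TS} = η^U` turn each of them into the corresponding
law of `U`. -/

theorem Deriv.equivalence {σ : Sgn} (E : Set (Eqn σ)) (X : Type) :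
    Equivalence (Deriv E (X := X)) :=
  ⟨.refl, .symm, .trans⟩

theorem Deriv.bind_congr {σ : Sgn} {E : Set (Eqn σ)} {X Y : Type} (t : Trm σ X)
    {g g' : X → Trm σ Y} (h : ∀ x, Deriv E (g x) (g' x)) : Deriv E (t.bind g) (t.bind g') := by
  induction t with
  | var x => exact h x
  | op f k ih => exact .congr f ih

theorem Deriv.of_eq {σ : Sgn} {E : Set (Eqn σ)} {X : Type} {s t : Trm σ X} (h : s = t) :
    Deriv E s t :=
  h ▸ .refl s

namespace Trm

variable {σ : Sgn} {X Y Z : Type}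

theorem bind_bind (t : Trm σ X) (g : X → Trm σ Y) (h : Y → Trm σ Z) :
    (t.bind g).bind h = t.bind fun x => (g x).bind h := by
  induction t with
  | var x => rfl
  | op f k ih => exact congrArg (op f) (funext ih)

theorem bind_var (t : Trm σ X) : t.bind .var = t := by
  induction t with
  | var x => rfl
  | op f k ih => exact congrArg (op f) (funext ih)

theorem rename_rename (f : Y → Z) (g : X → Y) (t : Trm σ X) :
    (t.rename g).rename f = t.rename (f ∘ g) :=
  bind_bind t _ _

end Trm

namespace FreeM

variable {σ : Sgn} {E : Set (Eqn σ)} {X Y Z : Type}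

theorem out_mk (t : Trm σ X) : Deriv E (Quot.out (mk (σ := σ) (E := E) t)) t :=
  ((Deriv.equivalence E X).eqvGen_iff).1 (Quot.eqvGen_exact (Quot.out_eq _))

theorem map_mk (f : X → Y) (t : Trm σ X) : map (E := E) f (mk t) = mk (t.rename f) :=
  Quot.sound (Deriv.subst _ (out_mk t))

theorem mul_mk (u : Trm σ (FreeM σ E X)) : mul (mk u) = mk (u.bind Quot.out) :=
  Quot.sound (Deriv.subst _ (out_mk u))

theorem map_unit (f : X → Y) (x : X) : map (E := E) f (unit x) = unit (f x) :=
  map_mk f _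

theorem map_map (f : Y → Z) (g : X → Y) (q : FreeM σ E X) :
    map f (map g q) = map (f ∘ g) q := by
  induction q using Quot.ind with
  | mk t => simp only [← mk.eq_def, map_mk, Trm.rename_rename]

theorem mul_unit (q : FreeM σ E X) : mul (unit q) = q := by
  rw [unit, mul_mk]
  exact Quot.out_eq q

theorem mul_map_unit (q : FreeM σ E X) : mul (map unit q) = q := by
  induction q using Quot.ind with
  | mk t =>
    rw [← mk.eq_def, map_mk, mul_mk]
    exact Quot.sound <| (Deriv.of_eq (Trm.bind_bind t _ _)).trans <|
      (Deriv.bind_congr t fun x => out_mk (.var x)).trans (.of_eq (Trm.bind_var t))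

theorem map_mul (f : X → Y) (q : FreeM σ E (FreeM σ E X)) :
    map f (mul q) = mul (map (map f) q) := by
  induction q using Quot.ind with
  | mk u =>
    rw [← mk.eq_def, mul_mk, map_mk, map_mk, mul_mk]
    exact Quot.sound <| (Deriv.of_eq (Trm.bind_bind u _ _)).trans <|
      (Deriv.bind_congr u fun c => (out_mk _).symm).trans
        (.of_eq (Trm.bind_bind u (fun c => .var (map f c)) Quot.out).symm)

theorem mul_mul (q : FreeM σ E (FreeM σ E (FreeM σ E X))) :
    mul (mul q) = mul (map mul q) := by
  induction q using Quot.ind with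
  | mk w =>
    rw [← mk.eq_def, mul_mk, mul_mk, map_mk, mul_mk]
    exact Quot.sound <| (Deriv.of_eq (Trm.bind_bind w _ _)).trans <|
      (Deriv.bind_congr w fun c => (out_mk _).symm).trans
        (.of_eq (Trm.bind_bind w (fun c => .var (mul c)) Quot.out).symm)

end FreeM

section Transport

variable {SS TT : Thy} {U : Composite SS TT}
  {φ : ∀ X : Type, FreeM (SS.sig.sum TT.sig) U.eqns X → TSobj SS TT X}
  {ψ : ∀ X : Type, TSobj SS TT X → FreeM (SS.sig.sum TT.sig) U.eqns X}

theorem psi_etaTS (hψ : ∀ (X : Type) (t : Trm TT.sig (Trm SS.sig X)),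
      ψ X (clTS SS TT t) = FreeM.mk (sepTS t)) (X : Type) (x : X) :
    ψ X (etaTS SS TT X x) = FreeM.unit x :=
  hψ X (.var (.var x))

theorem psi_muTS (hψnat : ∀ (X Y : Type) (f : X → Y) (q : TSobj SS TT X),
      ψ Y (FreeM.map (FreeM.map f) q) = FreeM.map f (ψ X q))
    (hψφ : ∀ X : Type, Function.LeftInverse (ψ X) (φ X))
    (X : Type) (q : TSobj SS TT (TSobj SS TT X)) :
    ψ X (muTS SS TT U φ ψ X q) = FreeM.mul (FreeM.map (ψ X) (ψ (TSobj SS TT X) q)) := by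
  rw [muTS, hψφ, hψnat]

theorem muTS_map_etaTS
    (hψη : ∀ (X : Type) (x : X), ψ X (etaTS SS TT X x) = FreeM.unit x)
    (hψnat : ∀ (X Y : Type) (f : X → Y) (q : TSobj SS TT X),
      ψ Y (FreeM.map (FreeM.map f) q) = FreeM.map f (ψ X q))
    (hψφ : ∀ X : Type, Function.LeftInverse (ψ X) (φ X))
    (hψinj : ∀ X : Type, Function.Injective (ψ X)) (X : Type) (q : TSobj SS TT X) :
    muTS SS TT U φ ψ X (FreeM.map (FreeM.map (etaTS SS TT X)) q) = q := by
  apply hψinj X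
  rw [psi_muTS hψnat hψφ, hψnat, FreeM.map_map,
    show ψ X ∘ etaTS SS TT X = FreeM.unit from funext (hψη X), FreeM.mul_map_unit]

theorem muTS_etaTS
    (hψη : ∀ (X : Type) (x : X), ψ X (etaTS SS TT X x) = FreeM.unit x)
    (hψnat : ∀ (X Y : Type) (f : X → Y) (q : TSobj SS TT X),
      ψ Y (FreeM.map (FreeM.map f) q) = FreeM.map f (ψ X q))
    (hψφ : ∀ X : Type, Function.LeftInverse (ψ X) (φ X))
    (hψinj : ∀ X : Type, Function.Injective (ψ X)) (X : Type) (q : TSobj SS TT X) :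
    muTS SS TT U φ ψ X (etaTS SS TT (TSobj SS TT X) q) = q := by
  apply hψinj X
  rw [psi_muTS hψnat hψφ, hψη, FreeM.map_unit, FreeM.mul_unit]

theorem muTS_muTS (hψnat : ∀ (X Y : Type) (f : X → Y) (q : TSobj SS TT X),
      ψ Y (FreeM.map (FreeM.map f) q) = FreeM.map f (ψ X q))
    (hψφ : ∀ X : Type, Function.LeftInverse (ψ X) (φ X))
    (hψinj : ∀ X : Type, Function.Injective (ψ X)) (X : Type)
    (q : TSobj SS TT (TSobj SS TT (TSobj SS TT X))) :
    muTS SS TT U φ ψ X (muTS SS TT U φ ψ (TSobj SS TT X) q) =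
      muTS SS TT U φ ψ X (FreeM.map (FreeM.map (muTS SS TT U φ ψ X)) q) := by
  apply hψinj X
  have hψμ : ψ X ∘ muTS SS TT U φ ψ X = FreeM.mul ∘ FreeM.map (ψ X) ∘ ψ (TSobj SS TT X) :=
    funext (psi_muTS hψnat hψφ X)
  simp only [psi_muTS hψnat hψφ, hψnat, FreeM.map_mul, FreeM.mul_mul, FreeM.map_map, hψμ]

end Transport

theorem composite_TS_is_monad_general (SS TT : Thy) (U : Composite SS TT)
    (φ : ∀ X : Type, FreeM (SS.sig.sum TT.sig) U.eqns X → TSobj SS TT X)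
    (ψ : ∀ X : Type, TSobj SS TT X → FreeM (SS.sig.sum TT.sig) U.eqns X)
    (hψ : ∀ (X : Type) (t : Trm TT.sig (Trm SS.sig X)),
        ψ X (clTS SS TT t) = FreeM.mk (sepTS t))
    (hψnat : ∀ (X Y : Type) (f : X → Y) (q : TSobj SS TT X),
        ψ Y (FreeM.map (FreeM.map f) q) = FreeM.map f (ψ X q))
    (hinv : ∀ X : Type, Function.LeftInverse (ψ X) (φ X) ∧
        Function.RightInverse (ψ X) (φ X)) :
    -- left unit law: μ^{TS} ∘ TSη^{TS} = id
    (∀ (X : Type) (q : TSobj SS TT X),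
        muTS SS TT U φ ψ X (FreeM.map (FreeM.map (etaTS SS TT X)) q) = q) ∧
    -- right unit law: μ^{TS} ∘ η^{TS}TS = id
    (∀ (X : Type) (q : TSobj SS TT X),
        muTS SS TT U φ ψ X (etaTS SS TT (TSobj SS TT X) q) = q) ∧
    -- associativity: μ^{TS} ∘ μ^{TS}TS = μ^{TS} ∘ TSμ^{TS}
    (∀ (X : Type) (q : TSobj SS TT (TSobj SS TT (TSobj SS TT X))),
        muTS SS TT U φ ψ X (muTS SS TT U φ ψ (TSobj SS TT X) q) =
        muTS SS TT U φ ψ X (FreeM.map (FreeM.map (muTS SS TT U φ ψ X)) q)) := by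
  have hψφ X := (hinv X).1
  have hψinj X := (hinv X).2.injective
  exact ⟨muTS_map_etaTS (psi_etaTS hψ) hψnat hψφ hψinj,
    muTS_etaTS (psi_etaTS hψ) hψnat hψφ hψinj, muTS_muTS hψnat hψφ hψinj⟩

/-- If `φ, ψ` are the mutually inverse natural transformations induced by
separation, then `(TS, η^Tη^S, φ ∘ μ^U ∘ ψψ)` is a monad: it satisfies both
unit laws and the associativity law. -/
theorem composite_TS_is_monad (SS TT : Thy) (U : Composite SS TT)
    (φ : ∀ X : Type, FreeM (SS.sig.sum TT.sig) U.eqns X → TSobj SS TT X)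
    (ψ : ∀ X : Type, TSobj SS TT X → FreeM (SS.sig.sum TT.sig) U.eqns X)
    (hφ : ∀ (X : Type) (u : Trm (SS.sig.sum TT.sig) X) (t : Trm TT.sig (Trm SS.sig X)),
        Deriv U.eqns u (sepTS t) → φ X (FreeM.mk u) = clTS SS TT t)
    (hψ : ∀ (X : Type) (t : Trm TT.sig (Trm SS.sig X)),
        ψ X (clTS SS TT t) = FreeM.mk (sepTS t))
    (hφnat : ∀ (X Y : Type) (f : X → Y) (q : FreeM (SS.sig.sum TT.sig) U.eqns X),
        φ Y (FreeM.map f q) = FreeM.map (FreeM.map f) (φ X q))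
    (hψnat : ∀ (X Y : Type) (f : X → Y) (q : TSobj SS TT X),
        ψ Y (FreeM.map (FreeM.map f) q) = FreeM.map f (ψ X q))
    (hinv : ∀ X : Type, Function.LeftInverse (ψ X) (φ X) ∧
        Function.RightInverse (ψ X) (φ X)) :
    -- left unit law: μ^{TS} ∘ TSη^{TS} = id
    (∀ (X : Type) (q : TSobj SS TT X),
        muTS SS TT U φ ψ X (FreeM.map (FreeM.map (etaTS SS TT X)) q) = q) ∧
    -- right unit law: μ^{TS} ∘ η^{TS}TS = id
    (∀ (X : Type) (q : TSobj SS TT X),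
        muTS SS TT U φ ψ X (etaTS SS TT (TSobj SS TT X) q) = q) ∧
    -- associativity: μ^{TS} ∘ μ^{TS}TS = μ^{TS} ∘ TSμ^{TS}
    (∀ (X : Type) (q : TSobj SS TT (TSobj SS TT (TSobj SS TT X))),
        muTS SS TT U φ ψ X (muTS SS TT U φ ψ (TSobj SS TT X) q) =
        muTS SS TT U φ ψ X (FreeM.map (FreeM.map (muTS SS TT U φ ψ X)) q)) :=
  composite_TS_is_monad_general SS TT U φ ψ hψ hψnat hinv
end

section
/- Let 𝕌 be a composite theory of 𝕋 after 𝕊, with free algebra monads U, S, T, separation isomorphisms φ : U ⇒ TS and ψ : TS ⇒ U, and μ^{TS} := φ ∘ μ^U ∘ (ψU ∘ TSψ). Then the middle unitary law holds: μ^{TS} ∘ (Tη^S η^T S) = id_{TS}. -/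
/-- The natural transformation `Tη^S η^T S : TS ⇒ TSTS`. -/
noncomputable def midUnits (SS TT : Thy) (X : Type) (q : TSobj SS TT X) :
    TSobj SS TT (TSobj SS TT X) :=
  FreeM.map
    (fun a : FreeM SS.sig SS.eqns X =>
      (FreeM.unit (FreeM.unit a : TSobj SS TT X) :
        FreeM SS.sig SS.eqns (TSobj SS TT X)))
    q

/-! ### Auxiliary lemmas -/

theorem Trm.bind_bind_s4 {σ : Sgn} {X Y Z : Type} (t : Trm σ X)
    (f : X → Trm σ Y) (g : Y → Trm σ Z) :
    (t.bind f).bind g = t.bind fun x => (f x).bind g := by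
  induction t with
  | var x => rfl
  | op h k ih =>
    simp only [Trm.bind]
    exact congrArg _ (funext ih)

theorem Trm.bind_var_s4 {σ : Sgn} {X : Type} (t : Trm σ X) :
    (t.bind fun x => Trm.var x) = t := by
  induction t with
  | var x => rfl
  | op h k ih =>
    simp only [Trm.bind]
    exact congrArg _ (funext ih)

theorem Trm.rename_rename_s4 {σ : Sgn} {X Y Z : Type} (t : Trm σ X)
    (f : X → Y) (g : Y → Z) :
    (t.rename f).rename g = t.rename (g ∘ f) :=
  Trm.bind_bind_s4 t _ _

theorem Trm.rename_bind {σ : Sgn} {X Y Z : Type} (t : Trm σ X)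
    (f : X → Y) (g : Y → Trm σ Z) :
    (t.rename f).bind g = t.bind (g ∘ f) :=
  Trm.bind_bind_s4 t _ _

theorem Trm.inr_rename {σ τ : Sgn} {X Y : Type} (f : X → Y) (t : Trm τ X) :
    (Trm.inr (t.rename f) : Trm (σ.sum τ) Y) = (Trm.inr t).rename f := by
  induction t with
  | var x => rfl
  | op h k ih =>
    simp only [Trm.inr, Trm.rename, Trm.bind] at *
    exact congrArg _ (funext ih)

theorem FreeM.exact {σ : Sgn} {E : Set (Eqn σ)} {X : Type} {s t : Trm σ X}
    (h : FreeM.mk (E := E) s = FreeM.mk t) : Deriv E s t := by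
  have h' := Quot.eqvGen_exact (r := fun s t : Trm σ X => Deriv E s t) h
  clear h
  induction h' with
  | rel _ _ h => exact h
  | refl _ => exact Deriv.refl _
  | symm _ _ _ ih => exact ih.symm
  | trans _ _ _ _ _ ih1 ih2 => exact ih1.trans ih2

theorem FreeM.out_mk_s4 {σ : Sgn} {E : Set (Eqn σ)} {X : Type} (t : Trm σ X) :
    Deriv E (Quot.out (FreeM.mk (E := E) t)) t :=
  FreeM.exact (Quot.out_eq _)

theorem FreeM.map_mk_s4 {σ : Sgn} {E : Set (Eqn σ)} {X Y : Type}
    (f : X → Y) (t : Trm σ X) :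
    FreeM.map (E := E) f (FreeM.mk t) = FreeM.mk (t.rename f) :=
  Quot.sound (Deriv.subst _ (FreeM.out_mk_s4 t))

theorem FreeM.mul_mk_s4 {σ : Sgn} {E : Set (Eqn σ)} {X : Type}
    (u : Trm σ (FreeM σ E X)) :
    FreeM.mul (FreeM.mk u) = FreeM.mk (u.bind fun c => Quot.out c) :=
  Quot.sound (Deriv.subst _ (FreeM.out_mk_s4 u))

/-- The middle unitary law: `μ^{TS} ∘ (Tη^S η^T S) = id_{TS}`. -/
theorem middle_unitary_law (SS TT : Thy) (U : Composite SS TT)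
    (φ : ∀ X : Type, FreeM (SS.sig.sum TT.sig) U.eqns X → TSobj SS TT X)
    (ψ : ∀ X : Type, TSobj SS TT X → FreeM (SS.sig.sum TT.sig) U.eqns X)
    (hφ : ∀ (X : Type) (u : Trm (SS.sig.sum TT.sig) X) (t : Trm TT.sig (Trm SS.sig X)),
        Deriv U.eqns u (sepTS t) → φ X (FreeM.mk u) = clTS SS TT t)
    (hψ : ∀ (X : Type) (t : Trm TT.sig (Trm SS.sig X)),
        ψ X (clTS SS TT t) = FreeM.mk (sepTS t))
    (hφnat : ∀ (X Y : Type) (f : X → Y) (q : FreeM (SS.sig.sum TT.sig) U.eqns X),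
        φ Y (FreeM.map f q) = FreeM.map (FreeM.map f) (φ X q))
    (hψnat : ∀ (X Y : Type) (f : X → Y) (q : TSobj SS TT X),
        ψ Y (FreeM.map (FreeM.map f) q) = FreeM.map f (ψ X q))
    (hinv : ∀ X : Type, Function.LeftInverse (ψ X) (φ X) ∧
        Function.RightInverse (ψ X) (φ X)) :
    ∀ (X : Type) (q : TSobj SS TT X),
      muTS SS TT U φ ψ X (midUnits SS TT X q) = q := by
  intro X q
  induction q using Quot.ind with
  | _ w =>
  show φ X (FreeM.mul (ψ _ (FreeM.map (FreeM.map (ψ X))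
      (FreeM.map _ (FreeM.mk w))))) = FreeM.mk w
  -- the unit of `ψ` on variables
  have hψunit : ∀ a : FreeM SS.sig SS.eqns X,
      ψ X (FreeM.unit a) = FreeM.mk (Trm.inl (Quot.out a)) := by
    intro a
    have h1 : (FreeM.unit a : TSobj SS TT X)
        = clTS SS TT (Trm.var (Quot.out a)) := by
      exact congrArg (fun b => FreeM.mk (Trm.var b)) (Quot.out_eq a).symm
    rw [h1, hψ]
    rfl
  -- compute the inner maps
  set f : FreeM SS.sig SS.eqns X → Trm SS.sig (FreeM (SS.sig.sum TT.sig) U.eqns X) :=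
    fun a => Trm.var (FreeM.mk (Trm.inl (Quot.out a))) with hf
  have hstep : FreeM.map (FreeM.map (ψ X))
      (FreeM.map (fun a : FreeM SS.sig SS.eqns X =>
        (FreeM.unit (FreeM.unit a : TSobj SS TT X) :
          FreeM SS.sig SS.eqns (TSobj SS TT X))) (FreeM.mk w))
      = clTS SS TT (w.rename f) := by
    rw [FreeM.map_mk_s4, FreeM.map_mk_s4, Trm.rename_rename_s4]
    show FreeM.mk _ = FreeM.mk ((w.rename f).rename FreeM.mk)
    rw [Trm.rename_rename_s4]
    congr 1
    congr 1
    funext a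
    show FreeM.map (ψ X) (FreeM.mk (Trm.var (FreeM.unit a)))
        = FreeM.mk (f a)
    rw [FreeM.map_mk_s4]
    show FreeM.mk (Trm.var (ψ X (FreeM.unit a))) = _
    rw [hψunit a]
  rw [hstep, hψ, FreeM.mul_mk_s4]
  -- identify the big term up to derivable equality with a separated term
  have hsep : Deriv U.eqns ((sepTS (w.rename f)).bind fun c => Quot.out c)
      (sepTS (w.rename fun a => Quot.out a)) := by
    unfold sepTS
    rw [Trm.inr_rename]
    erw [Trm.inr_rename]
    rw [Trm.rename_bind, Trm.rename_bind,
      Trm.bind_bind_s4]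
    apply Deriv.bind_congr
    intro a
    show Deriv U.eqns (Quot.out (FreeM.mk (Trm.inl (Quot.out a))))
      (Trm.inl (Quot.out a))
    exact FreeM.out_mk_s4 _
  rw [hφ X _ _ hsep]
  show FreeM.mk ((Trm.rename (fun a : FreeM SS.sig SS.eqns X => Quot.out a) w).rename
      FreeM.mk) = FreeM.mk w
  refine congrArg FreeM.mk ?_
  rw [Trm.rename_rename_s4]
  have h2 : ((FreeM.mk (E := SS.eqns)) ∘ fun a : FreeM SS.sig SS.eqns X => Quot.out a)
      = fun a => a := funext fun a => Quot.out_eq a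
  exact (congrArg (fun g => Trm.rename g w) h2).trans (Trm.bind_var_s4 w)
end
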